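/- arXiv:1004.4512 — 2 statements merged into one kernel-verified Lean document; each statement's English description precedes it below -/
import Mathlib

section
/- For integers s ≥ 3 and k ≥ 1, the quantity Σ_{d | gcd(s,k-1)} Σ_{t=1}^{min(s/d,(k-1)/d)} [φ(d)·d·t/(s(k-1))]·binom(s/d, t)·binom((s-1)(k-1)/d, (k-1)/d − t) is a nonnegative integer (for k ≥ 2; for k = 1 the count is 1). -/
/-!
Write `m = k - 1` and `n = s + (s - 1) m`. Vandermonde's identity collapses the inner sum over `t`
to `φ(d) C(n/d, m/d) / n`, and `gcd(n, m) = gcd(s, m)`, so the whole expression is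
`(1/n) ∑_{d ∣ gcd(n, m)} φ(d) C(n/d, m/d)`. By Burnside's lemma this is the number of orbits of the
`m`-element subsets of `ℤ/n` under rotation: a rotation of order `d` fixes exactly the unions of
cosets of the subgroup it generates, of which there are `C(n/d, m/d)` of size `m` when `d ∣ m`.
-/

open Pointwise Finset AddAction

section CosetUnion

variable {G : Type*} [AddCommGroup G] [Fintype G] {H : AddSubgroup G} [DecidableEq (G ⧸ H)]

theorem image_mk_filter_mk_mem (B : Finset (G ⧸ H)) :
    ({x | (x : G ⧸ H) ∈ B} : Finset G).image (↑) = B := by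
  ext q
  induction q using QuotientAddGroup.induction_on
  simp only [mem_image, mem_filter, mem_univ, true_and]
  exact ⟨fun ⟨a, ha, hab⟩ => hab ▸ ha, fun hq => ⟨_, hq, rfl⟩⟩

theorem card_filter_mk_mem (B : Finset (G ⧸ H)) :
    #({x | (x : G ⧸ H) ∈ B} : Finset G) = #B * Nat.card H := by
  have hpre : QuotientAddGroup.mk ⁻¹' (B : Set (G ⧸ H)) = ({x | (x : G ⧸ H) ∈ B} : Finset G) := by
    ext; simp
  have := Nat.card_congr (QuotientAddGroup.preimageMkEquivAddSubgroupProdSet H (B : Set (G ⧸ H)))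
  rwa [hpre, Nat.card_prod, Nat.card_coe_set_eq, Nat.card_coe_set_eq, Set.ncard_coe_finset,
    Set.ncard_coe_finset, mul_comm] at this

variable [DecidableEq G]

theorem filter_mk_mem_image_mk {A : Finset G} (hA : H ≤ stabilizer G A) :
    ({x | (x : G ⧸ H) ∈ A.image (↑)} : Finset G) = A := by
  have mem_of_mk_eq {a b : G} (ha : a ∈ A) (hab : (a : G ⧸ H) = b) : b ∈ A := by
    have hmem := vadd_mem_vadd_finset (a := -a + b) ha
    rwa [mem_stabilizer_iff.mp (hA (QuotientAddGroup.eq.mp hab)), vadd_eq_add,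
      neg_add_cancel_comm] at hmem
  ext x
  simp only [mem_filter, mem_univ, true_and, mem_image]
  exact ⟨fun ⟨a, ha, hax⟩ => mem_of_mk_eq ha hax, fun hx => ⟨x, hx, rfl⟩⟩

theorem le_stabilizer_filter_mk_mem (B : Finset (G ⧸ H)) :
    H ≤ stabilizer G ({x | (x : G ⧸ H) ∈ B} : Finset G) := by
  intro h hh
  rw [mem_stabilizer_iff]
  ext x
  have hmk : ((-h + x : G) : G ⧸ H) = x := QuotientAddGroup.eq.mpr (by simpa using hh)
  rw [← neg_neg h, mem_neg_vadd_finset_iff]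
  simp [hmk]

def invariantFinsetEquiv (m : ℕ) :
    {A : Finset G // #A = m ∧ H ≤ stabilizer G A} ≃
      {B : Finset (G ⧸ H) // #B * Nat.card H = m} where
  toFun A := ⟨A.1.image (↑), by rw [← card_filter_mk_mem, filter_mk_mem_image_mk A.2.2, A.2.1]⟩
  invFun B := ⟨({x | (x : G ⧸ H) ∈ B.1} : Finset G), (card_filter_mk_mem B.1).trans B.2,
    le_stabilizer_filter_mk_mem B.1⟩
  left_inv A := Subtype.ext (filter_mk_mem_image_mk A.2.2)
  right_inv B := Subtype.ext (image_mk_filter_mk_mem B.1)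

end CosetUnion

theorem card_filter_card_mul_eq {α : Type*} [Fintype α] {e : ℕ} (he : 0 < e) (m : ℕ) :
    #{B : Finset α | #B * e = m} = if e ∣ m then (Fintype.card α).choose (m / e) else 0 := by
  split_ifs with hdvd
  · obtain ⟨c, rfl⟩ := hdvd
    rw [Nat.mul_div_cancel_left _ he, ← Fintype.card_finset_len, Fintype.card_subtype]
    refine congrArg card (filter_congr fun B _ => ?_)
    rw [mul_comm, Nat.mul_left_cancel_iff he]
  · rw [card_eq_zero, filter_eq_empty_iff]
    exact fun B _ hB => hdvd ⟨#B, by rw [← hB, mul_comm]⟩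

instance Finset.addActionCardEq {G α : Type*} [AddGroup G] [AddAction G α] [DecidableEq α]
    (m : ℕ) : AddAction G {A : Finset α // #A = m} where
  vadd g A := ⟨g +ᵥ A.1, by rw [card_vadd_finset, A.2]⟩
  zero_vadd A := Subtype.ext (zero_vadd G A.1)
  add_vadd g h A := Subtype.ext (add_vadd g h A.1)

section Necklace

variable {G : Type*} [AddCommGroup G] [Fintype G] [DecidableEq G]

theorem card_fixedBy_finsetCardEq (g : G) (m : ℕ) :
    Nat.card (fixedBy {A : Finset G // #A = m} g)
      = if addOrderOf g ∣ m then (Fintype.card G / addOrderOf g).choose (m / addOrderOf g)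
        else 0 := by
  classical
  have hfixed : fixedBy {A : Finset G // #A = m} g
      ≃ {A : Finset G // #A = m ∧ AddSubgroup.zmultiples g ≤ stabilizer G A} :=
    (Equiv.subtypeEquivRight (q := fun A => AddSubgroup.zmultiples g ≤ stabilizer G A.1)
      fun A => by
        rw [mem_fixedBy, AddSubgroup.zmultiples_le, mem_stabilizer_iff, Subtype.ext_iff]
        rfl).trans (Equiv.subtypeSubtypeEquivSubtypeInter (fun A : Finset G => #A = m)
          fun A => AddSubgroup.zmultiples g ≤ stabilizer G A)
  have hquot : Fintype.card (G ⧸ AddSubgroup.zmultiples g) = Fintype.card G / addOrderOf g := by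
    rw [← Nat.card_eq_fintype_card, ← Nat.card_eq_fintype_card, ← AddSubgroup.index_eq_card,
      ← AddSubgroup.index_mul_card (AddSubgroup.zmultiples g), Nat.card_zmultiples,
      Nat.mul_div_cancel _ (addOrderOf_pos g)]
  rw [Nat.card_congr (hfixed.trans (invariantFinsetEquiv m)), Nat.card_eq_fintype_card,
    Fintype.card_subtype, Nat.card_zmultiples, card_filter_card_mul_eq (addOrderOf_pos g), hquot]

theorem IsAddCyclic.sum_comp_addOrderOf {G M : Type*} [AddGroup G] [Fintype G] [IsAddCyclic G]
    [AddCommMonoid M] (f : ℕ → M) :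
    ∑ g : G, f (addOrderOf g) = ∑ d ∈ (Fintype.card G).divisors, Nat.totient d • f d := by
  rw [← sum_fiberwise_of_maps_to (g := addOrderOf) (t := (Fintype.card G).divisors)
    fun g _ => Nat.mem_divisors.mpr ⟨addOrderOf_dvd_card, Fintype.card_ne_zero⟩]
  refine sum_congr rfl fun d hd => ?_
  rw [sum_congr rfl fun g hg => congrArg f (mem_filter.mp hg).2, sum_const,
    IsAddCyclic.card_addOrderOf_eq_totient (Nat.mem_divisors.mp hd).1]

theorem sum_divisors_ite_dvd {M : Type*} [AddCommMonoid M] {n : ℕ} (hn : n ≠ 0) (m : ℕ)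
    (f : ℕ → M) :
    ∑ d ∈ n.divisors, (if d ∣ m then f d else 0) = ∑ d ∈ (n.gcd m).divisors, f d := by
  rw [← sum_filter]
  refine sum_congr ?_ fun _ _ => rfl
  ext d
  simp [Nat.dvd_gcd_iff, hn]

theorem card_orbitRel_quotient_finsetCardEq_mul [IsAddCyclic G] (m : ℕ) :
    Nat.card (orbitRel.Quotient G {A : Finset G // #A = m}) * Fintype.card G
      = ∑ d ∈ (Nat.gcd (Fintype.card G) m).divisors,
          Nat.totient d * (Fintype.card G / d).choose (m / d) := by
  classical
  have := Fintype.ofFinite (orbitRel.Quotient G {A : Finset G // #A = m})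
  rw [Nat.card_eq_fintype_card, ← sum_card_fixedBy_eq_card_orbits_mul_card_addGroup,
    ← sum_divisors_ite_dvd Fintype.card_ne_zero]
  simp_rw [← Nat.card_eq_fintype_card (α := fixedBy _ _), card_fixedBy_finsetCardEq,
    IsAddCyclic.sum_comp_addOrderOf
      fun d => if d ∣ m then (Fintype.card G / d).choose (m / d) else 0,
    smul_eq_mul, mul_ite, mul_zero]

end Necklace

theorem sum_Icc_mul_choose_mul_choose_mul (a b c : ℕ) :
    (∑ t ∈ Icc 1 (min a b), t * a.choose t * c.choose (b - t)) * (a + c)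
      = a * b * (a + c).choose b := by
  cases a with
  | zero => simp
  | succ a =>
  cases b with
  | zero => simp
  | succ b =>
  have hshift : ∀ i, (i + 1) * (a + 1).choose (i + 1) * c.choose (b + 1 - (i + 1))
      = (a + 1) * (a.choose i * c.choose (b - i)) := fun i => by
    rw [mul_comm (i + 1), ← Nat.add_one_mul_choose_eq, Nat.add_sub_add_right, mul_assoc]
  have hsum : ∑ t ∈ Icc 1 (min (a + 1) (b + 1)), t * (a + 1).choose t * c.choose (b + 1 - t)
      = (a + 1) * (a + c).choose b := by
    rw [sum_subset (s₂ := range (b + 2)), sum_range_succ', Nat.add_choose_eq a c b,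
      Nat.sum_antidiagonal_eq_sum_range_succ (fun i j => a.choose i * c.choose j), mul_sum]
    · simp only [hshift, zero_mul, add_zero]
    · intro t ht
      simp only [mem_Icc, mem_range] at ht ⊢
      omega
    · intro t ht hti
      simp only [mem_Icc, mem_range] at ht hti
      rcases Nat.eq_zero_or_pos t with rfl | ht0
      · simp
      · simp [Nat.choose_eq_zero_of_lt (show a + 1 < t by omega)]
  rw [hsum, show a + 1 + c = a + c + 1 by omega, mul_assoc, mul_comm _ (a + c + 1),
    Nat.add_one_mul_choose_eq]
  ring

theorem sum_Icc_totient_mul_choose_mul_choose {s m d : ℕ} (hs : s ≠ 0) (hm : m ≠ 0)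
    (hd : d ∣ Nat.gcd s m) :
    ∑ t ∈ Icc 1 (min (s / d) (m / d)),
        ((Nat.totient d : ℚ) * d * t / (s * m)) * ((s / d).choose t : ℚ) *
          (((s - 1) * (m / d)).choose (m / d - t) : ℚ)
      = (Nat.totient d * ((s + (s - 1) * m) / d).choose (m / d) : ℕ) / (s + (s - 1) * m : ℕ) := by
  obtain ⟨a, rfl⟩ := hd.trans (Nat.gcd_dvd_left s m)
  obtain ⟨b, rfl⟩ := hd.trans (Nat.gcd_dvd_right _ m)
  have hd0 : d ≠ 0 := left_ne_zero_of_mul hs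
  have ha : a ≠ 0 := right_ne_zero_of_mul hs
  have hb : b ≠ 0 := right_ne_zero_of_mul hm
  set c := (d * a - 1) * b with hc
  have hn : d * a + (d * a - 1) * (d * b) = d * (a + c) := by rw [hc]; ring
  have hac : a + c ≠ 0 := by omega
  have key : ((∑ t ∈ Icc 1 (min a b), t * a.choose t * c.choose (b - t) : ℕ) : ℚ) * (a + c)
      = a * b * ((a + c).choose b : ℕ) := by
    exact_mod_cast sum_Icc_mul_choose_mul_choose_mul a b c
  simp only [hn, Nat.mul_div_cancel_left _ (Nat.pos_of_ne_zero hd0)]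
  calc _ = (Nat.totient d : ℚ) * d / (d * a * (d * b))
        * ((∑ t ∈ Icc 1 (min a b), t * a.choose t * c.choose (b - t) : ℕ) : ℚ) := by
        push_cast
        rw [mul_sum]
        refine sum_congr rfl fun t _ => ?_
        ring
    _ = _ := by
        rw [div_mul_eq_mul_div, div_eq_div_iff (by positivity) (by positivity)]
        push_cast at key ⊢
        linear_combination (Nat.totient d : ℚ) * d * d * key

/-- The Pólya-type count of `s`-gon dissections with `k` cells rooted at a cell, up to
rotation of the root cell, is a nonnegative integer. -/
theorem rooted_cluster_count_integer (s k : ℕ) (hs : 3 ≤ s) (hk : 2 ≤ k) :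
    ∃ N : ℕ,
      ∑ d ∈ (Nat.gcd s (k - 1)).divisors,
        ∑ t ∈ Finset.Icc 1 (min (s / d) ((k - 1) / d)),
          ((Nat.totient d : ℚ) * (d : ℚ) * (t : ℚ) / ((s : ℚ) * ((k - 1 : ℕ) : ℚ))) *
            (Nat.choose (s / d) t : ℚ) *
            (Nat.choose ((s - 1) * ((k - 1) / d)) ((k - 1) / d - t) : ℚ) = (N : ℚ) := by
  set m := k - 1
  set n := s + (s - 1) * m
  have hn : n ≠ 0 := by omega
  have : NeZero n := ⟨hn⟩
  have hnecklaces := card_orbitRel_quotient_finsetCardEq_mul (G := ZMod n) m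
  rw [ZMod.card, Nat.gcd_add_mul_right_left] at hnecklaces
  refine ⟨Nat.card (orbitRel.Quotient (ZMod n) {A : Finset (ZMod n) // #A = m}), ?_⟩
  rw [sum_congr rfl fun d hd => sum_Icc_totient_mul_choose_mul_choose (by omega) (by omega)
    (Nat.dvd_of_mem_divisors hd), ← sum_div, ← Nat.cast_sum, ← hnecklaces, Nat.cast_mul,
    mul_div_cancel_right₀ _ (Nat.cast_ne_zero.mpr hn)]
end

section
/- For positive integers n and m with n ≥ 2, removing from an (m+2)-angulation Δ of the (nm+2)-gon an m-diagonal α that is close to the border yields, after deleting the m extra boundary vertices, an (m+2)-angulation of the ((n−1)m+2)-gon with n−2 diagonals. -/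
/-- A chord of the `(nm+2)`-gon (vertices labeled `1,…,nm+2` clockwise) is recorded as a
pair `(i, j)` with `i < j`. It is an *m-diagonal* if it joins two non-adjacent boundary
vertices and divides the polygon into two parts whose numbers of sides
(`j - i + 1` and `(nm+2) - (j - i) + 1`) are both congruent to `2` modulo `m`. -/
def IsMDiagonal (n m : ℕ) (c : ℕ × ℕ) : Prop :=
  1 ≤ c.1 ∧ c.1 < c.2 ∧ c.2 ≤ n * m + 2 ∧
    2 ≤ c.2 - c.1 ∧ c.2 - c.1 ≤ n * m ∧
    (c.2 - c.1 + 1) % m = 2 % m ∧ ((n * m + 2) - (c.2 - c.1) + 1) % m = 2 % m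

/-- Two chords cross in the interior of the polygon. -/
def Crosses (a b : ℕ × ℕ) : Prop :=
  (a.1 < b.1 ∧ b.1 < a.2 ∧ a.2 < b.2) ∨ (b.1 < a.1 ∧ a.1 < b.2 ∧ b.2 < a.2)

/-- An `(m+2)`-angulation of the `(nm+2)`-gon: a maximal set of pairwise non-crossing
m-diagonals. -/
def IsAngulation (n m : ℕ) (Δ : Finset (ℕ × ℕ)) : Prop :=
  (∀ c ∈ Δ, IsMDiagonal n m c) ∧
    (∀ a ∈ Δ, ∀ b ∈ Δ, ¬ Crosses a b) ∧
    (∀ c, IsMDiagonal n m c → c ∉ Δ → ∃ d ∈ Δ, Crosses c d)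

/-- `β` lies (weakly) in the part of the polygon cut off by `α` between its endpoints. -/
def WeaklyInside (α β : ℕ × ℕ) : Prop := α.1 ≤ β.1 ∧ β.2 ≤ α.2

/-- `β` lies (weakly) in the part of the polygon on the other side of `α`. -/
def WeaklyOutside (α β : ℕ × ℕ) : Prop :=
  β.2 ≤ α.1 ∨ α.2 ≤ β.1 ∨ (β.1 ≤ α.1 ∧ α.2 ≤ β.2)

/-- An m-diagonal `α` of an `(m+2)`-angulation `Δ` of the `(nm+2)`-gon is *close to the
border* if one of the two parts it cuts off is an `(m+2)`-gon (has `m+2` sides) and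
contains no other diagonal of `Δ`; then all other sides of that `(m+2)`-gon are boundary
edges of the polygon. -/
def CloseToBorder (n m : ℕ) (Δ : Finset (ℕ × ℕ)) (α : ℕ × ℕ) : Prop :=
  α ∈ Δ ∧
    ((α.2 = α.1 + (m + 1) ∧ ∀ β ∈ Δ, β ≠ α → ¬ WeaklyInside α β) ∨
      (α.1 + (n * m + 2) = α.2 + (m + 1) ∧ ∀ β ∈ Δ, β ≠ α → ¬ WeaklyOutside α β))

/-- The result of removing from `Δ` a diagonal `α` close to the border: the
`(m+2)`-gon cut off by `α` is removed, its `m` extra boundary vertices are deleted,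
and the remaining vertices are relabeled `1,…,(n-1)m+2`. -/
def reduceAt (m : ℕ) (Δ : Finset (ℕ × ℕ)) (α : ℕ × ℕ) : Finset (ℕ × ℕ) :=
  if α.2 = α.1 + (m + 1) then
    (Δ.erase α).image fun β =>
      ((if α.1 < β.1 then β.1 - m else β.1), (if α.1 < β.2 then β.2 - m else β.2))
  else
    (Δ.erase α).image fun β => (β.1 - α.1 + 1, β.2 - α.1 + 1)

/-!
Deleting `α` and relabelling the surviving vertices order-preservingly onto `1, …, (n-1)m+2`
identifies the other diagonals of `Δ` with m-diagonals of the smaller polygon. A monotone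
relabelling preserves crossings, and an m-diagonal of the smaller polygon pulls back to an
m-diagonal of the larger one that cannot cross `α`; so maximality transfers as well. The count
`n - 2` holds because every `(m+2)`-angulation of the `(nm+2)`-gon has `n - 1` diagonals, by
induction on `n`: a diagonal of minimal span is close to the border, and removing it lowers `n`.
-/

theorem IsMDiagonal.pos {n m : ℕ} {c : ℕ × ℕ} (h : IsMDiagonal n m c) : 0 < m := by
  obtain ⟨-, -, -, h2, -, hmod, -⟩ := h
  rcases Nat.eq_zero_or_pos m with rfl | hm
  · simp only [Nat.mod_zero] at hmod
    omega
  · exact hm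

theorem IsMDiagonal.ne_zero {n m : ℕ} {c : ℕ × ℕ} (h : IsMDiagonal n m c) : n ≠ 0 := by
  rintro rfl
  obtain ⟨-, -, -, h2, h3, -⟩ := h
  simp only [zero_mul] at h3
  omega

theorem isMDiagonal_iff {n m : ℕ} (hm : 0 < m) {c : ℕ × ℕ} :
    IsMDiagonal n m c ↔ 1 ≤ c.1 ∧ c.2 ≤ n * m + 2 ∧ c.2 ≤ c.1 + n * m ∧
      ∃ k, 0 < k ∧ c.2 = c.1 + k * m + 1 := by
  constructor
  · rintro ⟨h1, h12, h2, hspan, hle, hmod, -⟩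
    obtain ⟨k, hk⟩ : m ∣ c.2 - c.1 - 1 :=
      (Nat.modEq_iff_dvd' (by omega)).1 (Nat.ModEq.add_right_cancel' 1 hmod).symm
    refine ⟨h1, h2, by omega, k, Nat.pos_of_ne_zero ?_, by rw [mul_comm]; omega⟩
    rintro rfl
    omega
  · rintro ⟨h1, h2, hle, k, hk, hj⟩
    have hkm : m ≤ k * m := Nat.le_mul_of_pos_left m hk
    have hkn : k ≤ n := Nat.le_of_mul_le_mul_right (by omega) hm
    have hsub := Nat.sub_mul n k m
    refine ⟨h1, by omega, h2, by omega, by omega, ?_, ?_⟩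
    · rw [show c.2 - c.1 + 1 = 2 + k * m by omega, Nat.add_mul_mod_self_right]
    · rw [show n * m + 2 - (c.2 - c.1) + 1 = 2 + (n - k) * m by omega,
        Nat.add_mul_mod_self_right]

theorem IsMDiagonal.add_lt {n m : ℕ} {c : ℕ × ℕ} (h : IsMDiagonal n m c) : c.1 + m < c.2 := by
  obtain ⟨-, -, -, k, hk, hc⟩ := (isMDiagonal_iff h.pos).1 h
  have := Nat.le_mul_of_pos_left m hk
  omega

theorem IsMDiagonal.not_weaklyInside {n m : ℕ} {α β : ℕ × ℕ} (hβ : IsMDiagonal n m β)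
    (hα : α.2 = α.1 + (m + 1)) (hne : β ≠ α) : ¬ WeaklyInside α β := by
  have := hβ.add_lt
  rw [WeaklyInside]
  rintro ⟨h₁, h₂⟩
  exact hne (Prod.ext (by omega) (by omega))

theorem not_isMDiagonal_one {m : ℕ} {c : ℕ × ℕ} : ¬ IsMDiagonal 1 m c := fun h => by
  have := h.add_lt
  have := h.2.2.2.2.1
  omega

theorem StrictMonoOn.crosses_map_iff {f : ℕ → ℕ} {S : Set ℕ} (hf : StrictMonoOn f S)
    {a b : ℕ × ℕ} (ha : a.1 ∈ S ∧ a.2 ∈ S) (hb : b.1 ∈ S ∧ b.2 ∈ S) :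
    Crosses (Prod.map f f a) (Prod.map f f b) ↔ Crosses a b := by
  simp only [Crosses, Prod.map_fst, Prod.map_snd, hf.lt_iff_lt, ha.1, ha.2, hb.1, hb.2]

theorem IsAngulation.image_erase {n n' m : ℕ} {Δ : Finset (ℕ × ℕ)} {α : ℕ × ℕ} {S : Set ℕ}
    {f : ℕ → ℕ} (hΔ : IsAngulation n m Δ) (hα : α ∈ Δ) (hf : StrictMonoOn f S)
    (hfS : Set.SurjOn f S (Set.Icc 1 (n' * m + 2))) (hΔS : ∀ β ∈ Δ.erase α, β.1 ∈ S ∧ β.2 ∈ S)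
    (hαS : ∀ x ∈ S, ∀ y ∈ S, ¬ Crosses (x, y) α)
    (hdiag : ∀ x ∈ S, ∀ y ∈ S,
      IsMDiagonal n' m (f x, f y) ↔ IsMDiagonal n m (x, y) ∧ (x, y) ≠ α) :
    IsAngulation n' m ((Δ.erase α).image (Prod.map f f)) ∧
      ((Δ.erase α).image (Prod.map f f)).card + 1 = Δ.card := by
  obtain ⟨hdiagΔ, hcross, hmax⟩ := hΔ
  refine ⟨⟨?_, ?_, ?_⟩, ?_⟩
  · simp only [Finset.mem_image]
    rintro _ ⟨β, hβ, rfl⟩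
    exact (hdiag _ (hΔS β hβ).1 _ (hΔS β hβ).2).2
      ⟨hdiagΔ β (Finset.mem_of_mem_erase hβ), Finset.ne_of_mem_erase hβ⟩
  · simp only [Finset.mem_image]
    rintro _ ⟨β, hβ, rfl⟩ _ ⟨γ, hγ, rfl⟩
    rw [hf.crosses_map_iff (hΔS β hβ) (hΔS γ hγ)]
    exact hcross β (Finset.mem_of_mem_erase hβ) γ (Finset.mem_of_mem_erase hγ)
  · rintro c' hc' hc'Δ
    obtain ⟨h1, h12, h2, -⟩ := id hc'
    obtain ⟨x, hx, hfx⟩ := hfS ⟨h1, by omega⟩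
    obtain ⟨y, hy, hfy⟩ := hfS ⟨by omega, h2⟩
    obtain rfl : Prod.map f f (x, y) = c' := Prod.ext hfx hfy
    obtain ⟨hc, hcα⟩ := (hdiag x hx y hy).1 hc'
    have hcΔ : (x, y) ∉ Δ := fun h =>
      hc'Δ (Finset.mem_image_of_mem _ (Finset.mem_erase.2 ⟨hcα, h⟩))
    obtain ⟨d, hd, hcd⟩ := hmax _ hc hcΔ
    have hdα : d ≠ α := by
      rintro rfl
      exact hαS x hx y hy hcd
    have hd' : d ∈ Δ.erase α := Finset.mem_erase.2 ⟨hdα, hd⟩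
    exact ⟨_, Finset.mem_image_of_mem _ hd', (hf.crosses_map_iff ⟨hx, hy⟩ (hΔS d hd')).2 hcd⟩
  · have hinj : Set.InjOn (Prod.map f f) (Δ.erase α) := fun β hβ γ hγ h =>
      Prod.ext (hf.injOn (hΔS β hβ).1 (hΔS γ hγ).1 (congrArg Prod.fst h))
        (hf.injOn (hΔS β hβ).2 (hΔS γ hγ).2 (congrArg Prod.snd h))
    rw [Finset.card_image_of_injOn hinj, Finset.card_erase_add_one hα]

theorem exists_mul_add_one_iff_add {m x z : ℕ} (hm : 0 < m) :
    (∃ k, 0 < k ∧ z = x + k * m + 1) ↔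
      (∃ k, 0 < k ∧ z + m = x + k * m + 1) ∧ z ≠ x + 1 := by
  constructor
  · rintro ⟨k, hk, rfl⟩
    have := Nat.le_mul_of_pos_left m hk
    exact ⟨⟨k + 1, k.succ_pos, by rw [add_one_mul]; omega⟩, by omega⟩
  · rintro ⟨⟨_ | _ | j, hk, hz⟩, hne⟩
    · omega
    · omega
    · exact ⟨j + 1, j.succ_pos, by rw [add_one_mul (j + 1)] at hz; omega⟩

/-- Relabelling of the vertices that survive deleting `a + 1, …, a + m`. -/
def dropGap (a m x : ℕ) : ℕ := if a < x then x - m else x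

section dropGap

variable {a m x : ℕ}

theorem dropGap_of_le (h : x ≤ a) : dropGap a m x = x := if_neg (by omega)

theorem dropGap_add_of_lt (h : a + m < x) : dropGap a m x + m = x := by
  rw [dropGap, if_pos (by omega)]
  omega

theorem strictMonoOn_dropGap : StrictMonoOn (dropGap a m) {x | x ≤ a ∨ a + m < x} := by
  rintro x (hx | hx) y (hy | hy) hxy
  · rwa [dropGap_of_le hx, dropGap_of_le hy]
  · have := dropGap_add_of_lt hy
    rw [dropGap_of_le hx]
    omega
  · omega
  · have := dropGap_add_of_lt hx
    have := dropGap_add_of_lt hy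
    omega

theorem surjOn_dropGap : Set.SurjOn (dropGap a m) {x | x ≤ a ∨ a + m < x} Set.univ := by
  intro y _
  rcases le_or_gt y a with hy | hy
  · exact ⟨y, Or.inl hy, dropGap_of_le hy⟩
  · have := dropGap_add_of_lt (m := m) (show a + m < y + m by omega)
    exact ⟨y + m, Or.inr (by omega), by omega⟩

theorem isMDiagonal_dropGap_iff {n y : ℕ} (hα : IsMDiagonal (n + 1) m (a, a + (m + 1)))
    (hx : x ≤ a ∨ a + m < x) (hy : y ≤ a ∨ a + m < y) :
    IsMDiagonal n m (dropGap a m x, dropGap a m y) ↔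
      IsMDiagonal (n + 1) m (x, y) ∧ (x, y) ≠ (a, a + (m + 1)) := by
  have hm := hα.pos
  obtain ⟨ha₁, -, ha₂, -⟩ := hα
  have hnm := add_one_mul n m
  simp only [isMDiagonal_iff hm, ne_eq, Prod.mk.injEq] at ha₂ ⊢
  rcases hx with hx | hx <;> rcases hy with hy | hy
  · rw [dropGap_of_le hx, dropGap_of_le hy]
    constructor
    · rintro ⟨h₁, h₂, h₃, hk⟩
      exact ⟨⟨h₁, by omega, by omega, hk⟩, by omega⟩
    · rintro ⟨⟨h₁, h₂, h₃, hk⟩, -⟩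
      exact ⟨h₁, by omega, by omega, hk⟩
  · have hfy := dropGap_add_of_lt hy
    rw [dropGap_of_le hx]
    generalize dropGap a m y = z at hfy ⊢
    subst hfy
    constructor
    · rintro ⟨h₁, h₂, h₃, hk⟩
      have := (exists_mul_add_one_iff_add hm).1 hk
      exact ⟨⟨h₁, by omega, by omega, this.1⟩, by omega⟩
    · rintro ⟨⟨h₁, h₂, h₃, hk⟩, hne⟩
      exact ⟨h₁, by omega, by omega, (exists_mul_add_one_iff_add hm).2 ⟨hk, by omega⟩⟩
  · have hfx := dropGap_add_of_lt (m := m) hx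
    rw [dropGap_of_le hy]
    constructor
    · rintro ⟨-, -, -, k, -, hk⟩
      omega
    · rintro ⟨⟨-, -, -, k, -, hk⟩, -⟩
      omega
  · have hfx := dropGap_add_of_lt hx
    have hfy := dropGap_add_of_lt hy
    generalize dropGap a m x = u at hfx ⊢
    generalize dropGap a m y = v at hfy ⊢
    subst hfx hfy
    constructor
    · rintro ⟨h₁, h₂, h₃, k, hk, hv⟩
      exact ⟨⟨by omega, by omega, by omega, k, hk, by omega⟩, by omega⟩
    · rintro ⟨⟨h₁, h₂, h₃, k, hk, hv⟩, -⟩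
      exact ⟨by omega, by omega, by omega, k, hk, by omega⟩

end dropGap

theorem IsAngulation.reduceAt_of_span_eq {n m : ℕ} {Δ : Finset (ℕ × ℕ)} {α : ℕ × ℕ}
    (hΔ : IsAngulation (n + 1) m Δ) (hα : α ∈ Δ) (hspan : α.2 = α.1 + (m + 1)) :
    IsAngulation n m (reduceAt m Δ α) ∧ (reduceAt m Δ α).card + 1 = Δ.card := by
  rw [reduceAt, if_pos hspan]
  obtain ⟨a, b⟩ := α
  obtain rfl : b = a + (m + 1) := hspan
  refine hΔ.image_erase (f := dropGap a m) hα strictMonoOn_dropGap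
    (surjOn_dropGap.mono le_rfl (Set.subset_univ _)) ?_ ?_
    (fun x hx y hy => isMDiagonal_dropGap_iff (hΔ.1 _ hα) hx hy)
  · intro β hβ
    have hβΔ := Finset.mem_of_mem_erase hβ
    have hlt := (hΔ.1 β hβΔ).2.1
    have hnc := hΔ.2.1 _ hα β hβΔ
    have hni := (hΔ.1 β hβΔ).not_weaklyInside rfl (Finset.ne_of_mem_erase hβ)
    simp only [Crosses, WeaklyInside] at hnc hni
    simp only [Set.mem_ofPred_eq]
    omega
  · rintro x hx y hy
    simp only [Set.mem_ofPred_eq] at hx hy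
    simp only [Crosses]
    omega

theorem strictMonoOn_sub_add_one (a : ℕ) : StrictMonoOn (fun x => x - a + 1) (Set.Ici a) :=
  fun x hx y hy hxy => by simp only [Set.mem_Ici] at hx hy; dsimp only; omega

theorem surjOn_sub_add_one (a N : ℕ) :
    Set.SurjOn (fun x => x - a + 1) (Set.Icc a (a + N)) (Set.Icc 1 (N + 1)) :=
  fun y ⟨hy₁, hy₂⟩ => ⟨y + a - 1, ⟨by omega, by omega⟩, by dsimp only; omega⟩

theorem isMDiagonal_sub_add_one_iff {n m a x y : ℕ}
    (hα : IsMDiagonal (n + 1) m (a, a + n * m + 1))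
    (hx : x ∈ Set.Icc a (a + n * m + 1)) (hy : y ∈ Set.Icc a (a + n * m + 1)) :
    IsMDiagonal n m (x - a + 1, y - a + 1) ↔
      IsMDiagonal (n + 1) m (x, y) ∧ (x, y) ≠ (a, a + n * m + 1) := by
  have hm := hα.pos
  obtain ⟨ha₁, -, ha₂, -⟩ := hα
  have hnm := add_one_mul n m
  simp only [Set.mem_Icc] at hx hy
  simp only [isMDiagonal_iff hm, ne_eq, Prod.mk.injEq] at ha₂ ⊢
  constructor
  · rintro ⟨h₁, h₂, h₃, k, hk, hy'⟩
    exact ⟨⟨by omega, by omega, by omega, k, hk, by omega⟩, by omega⟩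
  · rintro ⟨⟨h₁, h₂, h₃, k, hk, hy'⟩, hne⟩
    exact ⟨by omega, by omega, by omega, k, hk, by omega⟩

theorem IsAngulation.reduceAt_of_not_weaklyOutside {n m : ℕ} {Δ : Finset (ℕ × ℕ)} {α : ℕ × ℕ}
    (hΔ : IsAngulation (n + 1) m Δ) (hα : α ∈ Δ)
    (hspan : α.1 + ((n + 1) * m + 2) = α.2 + (m + 1))
    (hout : ∀ β ∈ Δ, β ≠ α → ¬ WeaklyOutside α β) (hne : α.2 ≠ α.1 + (m + 1)) :
    IsAngulation n m (reduceAt m Δ α) ∧ (reduceAt m Δ α).card + 1 = Δ.card := by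
  rw [reduceAt, if_neg hne]
  obtain ⟨a, b⟩ := α
  obtain rfl : b = a + n * m + 1 := by have := add_one_mul n m; dsimp only at hspan; omega
  refine hΔ.image_erase (f := fun x => x - a + 1) hα
    ((strictMonoOn_sub_add_one a).mono Set.Icc_subset_Ici_self)
    (surjOn_sub_add_one a (n * m + 1)) ?_ ?_
    (fun x hx y hy => isMDiagonal_sub_add_one_iff (hΔ.1 _ hα) hx hy)
  · intro β hβ
    have hβΔ := Finset.mem_of_mem_erase hβ
    have hlt := (hΔ.1 β hβΔ).2.1
    have hnc := hΔ.2.1 _ hα β hβΔ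
    have hno := hout β hβΔ (Finset.ne_of_mem_erase hβ)
    simp only [Crosses, WeaklyOutside] at hnc hno
    simp only [Set.mem_Icc]
    omega
  · rintro x hx y hy
    simp only [Set.mem_Icc] at hx hy
    simp only [Crosses]
    omega

theorem IsAngulation.reduceAt {n m : ℕ} {Δ : Finset (ℕ × ℕ)} {α : ℕ × ℕ}
    (hΔ : IsAngulation (n + 1) m Δ) (hα : CloseToBorder (n + 1) m Δ α) :
    IsAngulation n m (reduceAt m Δ α) ∧ (reduceAt m Δ α).card + 1 = Δ.card := by
  by_cases hspan : α.2 = α.1 + (m + 1)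
  · exact hΔ.reduceAt_of_span_eq hα.1 hspan
  · obtain ⟨hαΔ, ⟨h, -⟩ | ⟨h, hout⟩⟩ := hα
    · exact absurd h hspan
    · exact hΔ.reduceAt_of_not_weaklyOutside hαΔ h hout hspan

theorem IsAngulation.nonempty {n m : ℕ} {Δ : Finset (ℕ × ℕ)} (hm : 0 < m)
    (hΔ : IsAngulation (n + 2) m Δ) : Δ.Nonempty := by
  have h2m : 2 * m ≤ (n + 2) * m := Nat.mul_le_mul_right m (by omega)
  have hd : IsMDiagonal (n + 2) m (1, m + 2) :=
    (isMDiagonal_iff hm).2 ⟨le_rfl, by omega, by omega, 1, one_pos, by omega⟩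
  by_cases h : (1, m + 2) ∈ Δ
  · exact ⟨_, h⟩
  · obtain ⟨d, hd, -⟩ := hΔ.2.2 _ hd h
    exact ⟨d, hd⟩

/-- A diagonal of minimal span is close to the border: a diagonal crossing its shortest
possible subdiagonal would have to cross it or be shorter. -/
theorem IsAngulation.exists_closeToBorder {n m : ℕ} {Δ : Finset (ℕ × ℕ)}
    (hΔ : IsAngulation n m Δ) (hne : Δ.Nonempty) : ∃ α, CloseToBorder n m Δ α := by
  obtain ⟨α, hα, hmin⟩ := Δ.exists_min_image (fun β => β.2 - β.1) hne
  suffices hspan : α.2 = α.1 + (m + 1) from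
    ⟨α, hα, Or.inl ⟨hspan, fun β hβ hβα => (hΔ.1 β hβ).not_weaklyInside hspan hβα⟩⟩
  by_contra hspan
  have hαdiag := hΔ.1 α hα
  have hm := hαdiag.pos
  have hlt := hαdiag.add_lt
  obtain ⟨h₁, h₂, h₃, -⟩ := (isMDiagonal_iff hm).1 hαdiag
  have hγ : IsMDiagonal n m (α.1, α.1 + (m + 1)) :=
    (isMDiagonal_iff hm).2 ⟨h₁, by omega, by omega, 1, one_pos, by omega⟩
  have hγΔ : (α.1, α.1 + (m + 1)) ∉ Δ := fun h => by
    have := hmin _ h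
    dsimp only at this
    omega
  obtain ⟨d, hd, hcross⟩ := hΔ.2.2 _ hγ hγΔ
  have hdα := hmin d hd
  have hnc := hΔ.2.1 α hα d hd
  simp only [Crosses] at hcross hnc
  omega

theorem IsAngulation.card_eq {m : ℕ} (hm : 0 < m) :
    ∀ {n : ℕ} {Δ : Finset (ℕ × ℕ)}, IsAngulation (n + 1) m Δ → Δ.card = n
  | 0, Δ, hΔ => Finset.card_eq_zero.2 <|
      Finset.eq_empty_of_forall_notMem fun c hc => not_isMDiagonal_one (hΔ.1 c hc)
  | n + 1, Δ, hΔ => by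
    obtain ⟨α, hα⟩ := hΔ.exists_closeToBorder (hΔ.nonempty hm)
    obtain ⟨hred, hcard⟩ := hΔ.reduceAt hα
    rw [← hcard, IsAngulation.card_eq hm hred]

theorem reduceAt_isAngulation_general (n m : ℕ)
    (Δ : Finset (ℕ × ℕ)) (hΔ : IsAngulation n m Δ)
    (α : ℕ × ℕ) (hα : CloseToBorder n m Δ α) :
    IsAngulation (n - 1) m (reduceAt m Δ α) ∧ (reduceAt m Δ α).card = n - 2 := by
  have hαdiag := hΔ.1 α hα.1
  obtain ⟨n, rfl⟩ := Nat.exists_eq_add_one_of_ne_zero hαdiag.ne_zero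
  obtain ⟨hred, hcard⟩ := hΔ.reduceAt hα
  have hΔcard := hΔ.card_eq hαdiag.pos
  exact ⟨by rwa [Nat.add_sub_cancel], by omega⟩

/-- Removing from an `(m+2)`-angulation `Δ` of the `(nm+2)`-gon a diagonal `α`
close to the border yields an `(m+2)`-angulation of the `((n-1)m+2)`-gon with
`n-2` diagonals. -/
theorem reduceAt_isAngulation (n m : ℕ) (hn : 2 ≤ n) (hm : 1 ≤ m)
    (Δ : Finset (ℕ × ℕ)) (hΔ : IsAngulation n m Δ)
    (α : ℕ × ℕ) (hα : CloseToBorder n m Δ α) :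
    IsAngulation (n - 1) m (reduceAt m Δ α) ∧ (reduceAt m Δ α).card = n - 2 :=
  reduceAt_isAngulation_general n m Δ hΔ α hα
end
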